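/- For the state |μ(n)⟩ = (1/√H_n) Σ_{i=1}^n (1/√i)|i⟩|i⟩ with H_n = Σ_{i=1}^n 1/i, the reduced state ρ_A has eigenvalues 1/(i·H_n), and for 0 < δ < 1/2 and n sufficiently large, Δ_δ(ρ_A) ≥ (1-2δ)·log n - 4 - log log(n+1). -/

import Mathlib

/-- The n-th harmonic number `H_n = Σ_{i=1}^n 1/i`. -/
noncomputable def harmonicSum (n : ℕ) : ℝ := ∑ i ∈ Finset.Icc 1 n, (1 : ℝ) / i

/-- `Δ_δ(r) = log₂ min { |J| · max_{j∈J} r_j : Σ_{j∈J} r_j ≥ 1-δ }`. -/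
noncomputable def Delta {ι : Type*} [Fintype ι] (r : ι → ℝ) (δ : ℝ) : ℝ :=
  sInf { x | ∃ J : Finset ι, 1 - δ ≤ ∑ j ∈ J, r j ∧
    x = Real.logb 2 ((J.card : ℝ) * (⨆ j ∈ (J : Set ι), r j)) }

/-!
Let `J` carry spectral weight at least `1 - δ`, with `k = |J|` and `m + 1` the smallest index
in `J`. The `k` largest eigenvalues dominate the sum over `J`, so `(1 - δ) H_n ≤ H_k`; and `J`
lies in the tail `{m + 1, …, n}`, so `H_m ≤ δ H_n`. With `ln (i + 1) ≤ H_i ≤ 1 + ln i` this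
gives `ln k - ln (m + 1) ≥ (1 - 2δ) ln n - 1`, while `max_J r = 1 / ((m + 1) H_n)` and
`H_n ≤ log₂ (n + 1)`.
-/

open Finset Real

namespace Finset

theorem sum_le_sum_range_card_of_antitone {M : Type*} [AddCommMonoid M] [PartialOrder M]
    [IsOrderedAddMonoid M] {f : ℕ → M} (hf : Antitone f) (s : Finset ℕ) :
    ∑ i ∈ s, f i ≤ ∑ i ∈ range #s, f i := by
  induction s using Finset.induction_on_max with
  | empty => simp
  | insert a s ha ih =>
    have has : a ∉ s := fun h => lt_irrefl a (ha a h)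
    have hcard : #s ≤ a := by
      simpa using card_le_card fun x hx => mem_range.2 (ha x hx)
    rw [sum_insert has, card_insert_of_notMem has, sum_range_succ, add_comm]
    exact add_le_add ih (hf hcard)

end Finset

lemma harmonicSum_eq_harmonic (n : ℕ) : harmonicSum n = harmonic n := by
  simp [harmonicSum, harmonic_eq_sum_Icc]

lemma harmonic_eq_sum_range_inv_succ (n : ℕ) :
    (harmonic n : ℝ) = ∑ i ∈ range n, ((i : ℝ) + 1)⁻¹ := by
  simp [harmonic]

lemma sum_inv_succ_le_harmonic_card (s : Finset ℕ) :
    ∑ i ∈ s, ((i : ℝ) + 1)⁻¹ ≤ harmonic #s := by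
  rw [harmonic_eq_sum_range_inv_succ]
  refine sum_le_sum_range_card_of_antitone (fun a b hab => ?_) s
  gcongr

lemma sum_inv_succ_le_harmonic_sub {s : Finset ℕ} {m n : ℕ} (hs : s ⊆ Ico m n) (hmn : m ≤ n) :
    ∑ i ∈ s, ((i : ℝ) + 1)⁻¹ ≤ harmonic n - harmonic m := by
  rw [harmonic_eq_sum_range_inv_succ, harmonic_eq_sum_range_inv_succ, ← sum_Ico_eq_sub _ hmn]
  exact sum_le_sum_of_subset_of_nonneg hs fun i _ _ => by positivity

lemma harmonic_le_logb_two_add_one {n : ℕ} (hn : 16 ≤ n) :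
    (harmonic n : ℝ) ≤ logb 2 (n + 1) := by
  have hlog2 : log 2 < 3 / 4 := by linarith [Real.log_two_lt_d9]
  have hlog2_pos : 0 < log 2 := log_pos one_lt_two
  have hlogn : 4 * log 2 ≤ log n := by
    rw [← log_rpow zero_lt_two]
    exact log_le_log (by norm_num) (by norm_num; exact_mod_cast hn)
  rw [logb, le_div_iff₀ hlog2_pos]
  calc (harmonic n : ℝ) * log 2 ≤ (1 + log n) * log 2 := by
        gcongr; exact harmonic_le_one_add_log n
    _ ≤ log n := by nlinarith
    _ ≤ log (n + 1) := log_le_log (by positivity) (by linarith)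

lemma le_ciSup_mem_of_finite {ι α : Type*} [Finite ι] [ConditionallyCompleteLattice α]
    (f : ι → α) {s : Set ι} {i : ι} (hi : i ∈ s) :
    f i ≤ ⨆ j ∈ s, f j :=
  le_ciSup₂ (f := fun j (_ : j ∈ s) => f j)
    ((Set.finite_range f).bddAbove.mono (Set.iUnion_subset fun j => Set.range_subset_iff.2
      fun _ => Set.mem_range_self j)) i hi

/-- The eigenvalues `1 / (i H_n)` of `ρ_A`, reindexed by `j = i - 1 : Fin n`. -/
noncomputable def embezzlingSpectrum (n : ℕ) (j : Fin n) : ℝ :=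
  1 / (((j : ℕ) + 1 : ℝ) * harmonicSum n)

section EmbezzlingSpectrum

variable {n : ℕ} {δ : ℝ} {J : Finset (Fin n)}

lemma sum_embezzlingSpectrum :
    ∑ j ∈ J, embezzlingSpectrum n j
      = (∑ i ∈ J.map Fin.valEmbedding, ((i : ℝ) + 1)⁻¹) / harmonic n := by
  rw [sum_map, sum_div]
  refine sum_congr rfl fun j _ => ?_
  rw [embezzlingSpectrum, harmonicSum_eq_harmonic, one_div, mul_inv, div_eq_mul_inv]
  rfl

lemma sum_univ_embezzlingSpectrum (hn : n ≠ 0) : ∑ j, embezzlingSpectrum n j = 1 := by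
  rw [sum_embezzlingSpectrum, Fin.map_valEmbedding_univ, Nat.Iio_eq_range,
    ← harmonic_eq_sum_range_inv_succ]
  exact div_self (by exact_mod_cast (harmonic_pos hn).ne')

lemma embezzlingSpectrum_pos (hn : n ≠ 0) (j : Fin n) : 0 < embezzlingSpectrum n j := by
  rw [embezzlingSpectrum, harmonicSum_eq_harmonic]
  have := harmonic_pos hn
  positivity

lemma one_sub_mul_harmonic_le_harmonic_card (hn : n ≠ 0)
    (hJ : 1 - δ ≤ ∑ j ∈ J, embezzlingSpectrum n j) :
    (1 - δ) * harmonic n ≤ harmonic #J := by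
  rw [sum_embezzlingSpectrum, le_div_iff₀ (by exact_mod_cast harmonic_pos hn)] at hJ
  simpa using hJ.trans (sum_inv_succ_le_harmonic_card _)

lemma harmonic_min'_le_mul_harmonic (hn : n ≠ 0)
    (hJ : 1 - δ ≤ ∑ j ∈ J, embezzlingSpectrum n j) (hne : J.Nonempty) :
    harmonic (J.min' hne : ℕ) ≤ δ * harmonic n := by
  have hsub : J.map Fin.valEmbedding ⊆ Ico (J.min' hne : ℕ) n := by
    simp only [subset_iff, mem_map, Fin.valEmbedding_apply, mem_Ico, forall_exists_index, and_imp]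
    rintro _ j hj rfl
    exact ⟨J.min'_le j hj, j.isLt⟩
  rw [sum_embezzlingSpectrum, le_div_iff₀ (by exact_mod_cast harmonic_pos hn)] at hJ
  linarith [hJ.trans (sum_inv_succ_le_harmonic_sub hsub (J.min' hne).isLt.le)]

lemma le_logb_card_mul_embezzlingSpectrum_min' (hn : 16 ≤ n) (hδ : δ < 1 / 2)
    (hJ : 1 - δ ≤ ∑ j ∈ J, embezzlingSpectrum n j) (hne : J.Nonempty) :
    (1 - 2 * δ) * logb 2 n - 4 - logb 2 (logb 2 (n + 1))
      ≤ logb 2 (#J * embezzlingSpectrum n (J.min' hne)) := by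
  set m : ℕ := (J.min' hne : ℕ)
  set H : ℝ := (harmonic n : ℝ)
  have hn0 : n ≠ 0 := by omega
  have hH : 0 < H := Rat.cast_pos.2 (harmonic_pos hn0)
  have hk : (0 : ℝ) < #J := by exact_mod_cast hne.card_pos
  have hlogn : log n ≤ H := by
    have := log_add_one_le_harmonic n
    push_cast at this
    exact (log_le_log (Nat.cast_pos.2 (by omega)) (by linarith)).trans this
  have hlogk : (1 - δ) * H - 1 ≤ log #J := by
    linarith [one_sub_mul_harmonic_le_harmonic_card hn0 hJ, harmonic_le_one_add_log #J]
  have hlogm : log (m + 1) ≤ δ * H := by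
    have := log_add_one_le_harmonic m
    push_cast at this
    linarith [harmonic_min'_le_mul_harmonic hn0 hJ hne]
  have hlog2 : 1 / 4 < log 2 := by linarith [Real.log_two_gt_d9]
  have hmain : (1 - 2 * δ) * logb 2 n - 4 ≤ logb 2 #J - logb 2 (m + 1) :=
    calc (1 - 2 * δ) * logb 2 n - 4 ≤ (1 - 2 * δ) * logb 2 n - 1 / log 2 := by
          gcongr; rw [div_le_iff₀ (by positivity)]; linarith
      _ = ((1 - 2 * δ) * log n - 1) / log 2 := by rw [logb]; ring
      _ ≤ (log #J - log (m + 1)) / log 2 := by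
          gcongr ?_ / _; nlinarith [mul_le_mul_of_nonneg_left hlogn (by linarith : 0 ≤ 1 - 2 * δ)]
      _ = logb 2 #J - logb 2 (m + 1) := by rw [logb, logb, sub_div]
  have hlogH : logb 2 H ≤ logb 2 (logb 2 (n + 1)) :=
    logb_le_logb_of_le one_lt_two hH (harmonic_le_logb_two_add_one hn)
  have hspec : embezzlingSpectrum n (J.min' hne) = 1 / ((m + 1) * H) := by
    rw [embezzlingSpectrum, harmonicSum_eq_harmonic]
  rw [hspec, mul_one_div, logb_div hk.ne' (by positivity), logb_mul (by positivity) hH.ne']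
  linarith

end EmbezzlingSpectrum

/-- For the embezzling state `|μ(n)⟩ = H_n^{-1/2} Σ_{i=1}^n i^{-1/2}|i⟩|i⟩`,
whose reduced state has eigenvalues `1/(i·H_n)` for i = 1,…,n, one has for every
0 < δ < 1/2 and all sufficiently large n:
`Δ_δ(ρ_A) ≥ (1-2δ)·log₂ n - 4 - log₂ log₂ (n+1)`. -/
theorem embezzling_state_delta_lower_bound (δ : ℝ) (hδ0 : 0 < δ) (hδ : δ < 1 / 2) :
    ∃ N : ℕ, ∀ n ≥ N,
      Delta (fun j : Fin n => 1 / (((j : ℕ) + 1 : ℝ) * harmonicSum n)) δ ≥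
        (1 - 2 * δ) * Real.logb 2 n - 4 - Real.logb 2 (Real.logb 2 (n + 1)) := by
  refine ⟨16, fun n hn => ?_⟩
  show (1 - 2 * δ) * logb 2 n - 4 - logb 2 (logb 2 (n + 1)) ≤ Delta (embezzlingSpectrum n) δ
  refine le_csInf ?_ ?_
  · exact ⟨_, univ, by rw [sum_univ_embezzlingSpectrum (by omega)]; linarith, rfl⟩
  rintro _ ⟨J, hJ, rfl⟩
  have hne : J.Nonempty := nonempty_iff_ne_empty.2 fun h => by
    rw [h, sum_empty] at hJ
    linarith
  calc _ ≤ logb 2 (#J * embezzlingSpectrum n (J.min' hne)) :=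
        le_logb_card_mul_embezzlingSpectrum_min' hn hδ hJ hne
    _ ≤ _ := logb_le_logb_of_le one_lt_two
        (mul_pos (mod_cast hne.card_pos) (embezzlingSpectrum_pos (by omega) _)) <|
        mul_le_mul_of_nonneg_left (le_ciSup_mem_of_finite _ (J.min'_mem hne)) (Nat.cast_nonneg _)
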